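/- Let d = 2h with h ≥ 1, and set Π := ∏_{l=0}^{h−1} (l·v + (d−l)·u) and L := (h+1)·v + (h−1)·u in R. Then the ideal of R generated by (u+v)·∂Π and (u+v)·∂(Π·L) equals the ideal of R generated by (u+v)·∂Π and (u+v)·Π. -/

import Mathlib

noncomputable section

abbrev R2 : Type := MvPolynomial (Fin 2) ℚ

def uu : R2 := MvPolynomial.X 0
def vv : R2 := MvPolynomial.X 1

/-- The involution of `R2 = ℚ[u,v]` swapping `u` and `v`; `P*`. -/
def swapUV (P : R2) : R2 := MvPolynomial.rename (Equiv.swap (0 : Fin 2) 1) P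

/-- `Q_k(y) = ∏_{j=0}^{k} (y + j·u + (k−j)·v)` in `R2[y]`. -/
def Qp (k : ℕ) : Polynomial R2 :=
  ∏ j ∈ Finset.range (k + 1),
    (Polynomial.X + Polynomial.C ((j : R2) * uu + ((k - j : ℕ) : R2) * vv))

/-- `C_{d+1} = ∏_{j=0}^{d} (j·u + (d−j)·v)` in `R2`. -/
def Cdtop (d : ℕ) : R2 :=
  ∏ j ∈ Finset.range (d + 1), ((j : R2) * uu + ((d - j : ℕ) : R2) * vv)

/-- `Q_k(x_i)` as an element of `R2[x_1,…,x_r]`. -/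
def Qm (r k : ℕ) (i : Fin r) : MvPolynomial (Fin r) R2 :=
  ∏ j ∈ Finset.range (k + 1),
    (MvPolynomial.X i + MvPolynomial.C ((j : R2) * uu + ((k - j : ℕ) : R2) * vv))

/-!
The divided difference obeys the Leibniz rule `∂(ΠL) = ∂Π · L* + Π · ∂L`, and for the linear form
`L = (h+1)v + (h-1)u` one has `∂L = -2`. Hence `(u+v)∂(ΠL) = (u+v)∂Π · L* - 2 (u+v)Π`, and since
`-2` is a unit the two generating pairs span the same ideal.
-/

theorem Ideal.span_pair_mul_left_unit {α : Type*} [CommSemiring α] {u : α} (hu : IsUnit u)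
    (x y : α) : Ideal.span {x, u * y} = Ideal.span {x, y} := by
  rw [Ideal.span_insert, Ideal.span_insert, Ideal.span_singleton_mul_left_unit hu]

theorem swapUV_mul (a b : R2) : swapUV (a * b) = swapUV a * swapUV b :=
  map_mul _ a b

theorem swapUV_add (a b : R2) : swapUV (a + b) = swapUV a + swapUV b :=
  map_add _ a b

theorem swapUV_sub (a b : R2) : swapUV (a - b) = swapUV a - swapUV b :=
  map_sub _ a b

@[simp]
theorem swapUV_one : swapUV 1 = 1 :=
  map_one _

@[simp]
theorem swapUV_natCast (n : ℕ) : swapUV n = n :=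
  map_natCast _ n

@[simp]
theorem swapUV_uu : swapUV uu = vv := by
  simp [swapUV, uu, vv]

@[simp]
theorem swapUV_vv : swapUV vv = uu := by
  simp [swapUV, uu, vv]

theorem uu_sub_vv_ne_zero : uu - vv ≠ 0 :=
  sub_ne_zero.mpr <| (MvPolynomial.X_injective (R := ℚ)).ne (by decide)

theorem divDiff_mul {P L DP DL DPL : R2} (hP : (uu - vv) * DP = P - swapUV P)
    (hL : (uu - vv) * DL = L - swapUV L) (hPL : (uu - vv) * DPL = P * L - swapUV (P * L)) :
    DPL = DP * swapUV L + P * DL := by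
  apply mul_left_cancel₀ uu_sub_vv_ne_zero
  linear_combination hPL - swapUV L * hP - P * hL - swapUV_mul P L

theorem divDiff_linear {a b : R2} (ha : swapUV a = a) (hb : swapUV b = b) :
    (uu - vv) * (b - a) = (a * vv + b * uu) - swapUV (a * vv + b * uu) := by
  rw [swapUV_add, swapUV_mul, swapUV_mul, ha, hb, swapUV_uu, swapUV_vv]
  ring

theorem stmt17_general (h : ℕ) (d : ℕ)
    (DPi DPiL : R2)
    (hDPi : (uu - vv) * DPi =
        (∏ l ∈ Finset.range h, ((l : R2) * vv + ((d - l : ℕ) : R2) * uu)) -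
          swapUV (∏ l ∈ Finset.range h, ((l : R2) * vv + ((d - l : ℕ) : R2) * uu)))
    (hDPiL : (uu - vv) * DPiL =
        (∏ l ∈ Finset.range h, ((l : R2) * vv + ((d - l : ℕ) : R2) * uu)) *
            (((h : R2) + 1) * vv + ((h : R2) - 1) * uu) -
          swapUV ((∏ l ∈ Finset.range h, ((l : R2) * vv + ((d - l : ℕ) : R2) * uu)) *
            (((h : R2) + 1) * vv + ((h : R2) - 1) * uu))) :
    Ideal.span ({(uu + vv) * DPi, (uu + vv) * DPiL} : Set R2) =
      Ideal.span ({(uu + vv) * DPi,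
        (uu + vv) * ∏ l ∈ Finset.range h, ((l : R2) * vv + ((d - l : ℕ) : R2) * uu)} : Set R2) := by
  set P : R2 := ∏ l ∈ Finset.range h, ((l : R2) * vv + ((d - l : ℕ) : R2) * uu)
  set L : R2 := ((h : R2) + 1) * vv + ((h : R2) - 1) * uu
  have hL : (uu - vv) * ((h : R2) - 1 - ((h : R2) + 1)) = L - swapUV L :=
    divDiff_linear (by simp [swapUV_add]) (by simp [swapUV_sub])
  have hgen : (uu + vv) * DPiL = (uu + vv) * DPi * swapUV L + (-2) * ((uu + vv) * P) := by
    rw [divDiff_mul hDPi hL hDPiL]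
    ring
  have hunit : IsUnit (-2 : R2) := by
    have h2 := (IsUnit.mk0 (2 : ℚ) two_ne_zero).map (algebraMap ℚ R2)
    rw [map_ofNat] at h2
    exact h2.neg
  rw [hgen, Ideal.span_pair_left_mul_add, Ideal.span_pair_mul_left_unit hunit]

/-- Proposition 4.5, identity (2): for `d = 2h`, `Π = ∏_{l=0}^{h−1}(lv+(d−l)u)`,
`L = (h+1)v + (h−1)u`, one has `((u+v)·∂Π, (u+v)·∂(ΠL)) = ((u+v)·∂Π, (u+v)·Π)`. -/
theorem stmt17 (h : ℕ) (hh : 1 ≤ h) (d : ℕ) (hd : d = 2 * h)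
    (DPi DPiL : R2)
    (hDPi : (uu - vv) * DPi =
        (∏ l ∈ Finset.range h, ((l : R2) * vv + ((d - l : ℕ) : R2) * uu)) -
          swapUV (∏ l ∈ Finset.range h, ((l : R2) * vv + ((d - l : ℕ) : R2) * uu)))
    (hDPiL : (uu - vv) * DPiL =
        (∏ l ∈ Finset.range h, ((l : R2) * vv + ((d - l : ℕ) : R2) * uu)) *
            (((h : R2) + 1) * vv + ((h : R2) - 1) * uu) -
          swapUV ((∏ l ∈ Finset.range h, ((l : R2) * vv + ((d - l : ℕ) : R2) * uu)) *
            (((h : R2) + 1) * vv + ((h : R2) - 1) * uu))) :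
    Ideal.span ({(uu + vv) * DPi, (uu + vv) * DPiL} : Set R2) =
      Ideal.span ({(uu + vv) * DPi,
        (uu + vv) * ∏ l ∈ Finset.range h, ((l : R2) * vv + ((d - l : ℕ) : R2) * uu)} : Set R2) :=
  stmt17_general h d DPi DPiL hDPi hDPiL
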